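/- arXiv:1605.03652 — 5 statements merged into one kernel-verified Lean document; each statement's English description precedes it below -/
import Mathlib

section
/- Let B ∈ ℝ^{n×m} have full column rank and let Δ be a symmetric n×n matrix such that Δ = BH + H'B' for some H ∈ ℝ^{m×n}. Among all H satisfying this equation, the minimizer of the Frobenius norm ‖H‖_F is unique and has the form H = B'Λ for some symmetric n×n matrix Λ. -/
/-!
The solution set of `B H + (B H)ᵀ = Δ` is a translate of the kernel of the linear map
`L H = B H + (B H)ᵀ`, so by Pythagoras its unique element of least Frobenius norm is the one
orthogonal to `ker L`. With respect to the Frobenius inner product `⟪X, Y⟫ = tr (X Yᵀ)`, the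
adjoint of `L` is `S ↦ Bᵀ (S + Sᵀ)`, hence `(ker L)ᗮ = range L† = {Bᵀ Λ | Λ symmetric}`.
-/

open Matrix

noncomputable def frobNorm {n m : ℕ} (H : Matrix (Fin m) (Fin n) ℝ) : ℝ :=
  Real.sqrt ((H * Hᵀ).trace)

section MinNorm

variable {E F : Type*} [NormedAddCommGroup E] [InnerProductSpace ℝ E] [AddCommGroup F]
  [Module ℝ F]

theorem norm_sq_eq_norm_sq_add_norm_sub_sq_of_mem_orthogonal {K : Submodule ℝ E} {x₀ x : E}
    (h₀ : x₀ ∈ Kᗮ) (h : x - x₀ ∈ K) : ‖x‖ ^ 2 = ‖x₀‖ ^ 2 + ‖x - x₀‖ ^ 2 := by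
  have horth : inner ℝ x₀ (x - x₀) = 0 := K.inner_left_of_mem_orthogonal h h₀
  simpa [sq] using norm_add_sq_eq_norm_sq_add_norm_sq_real horth

theorem LinearMap.existsUnique_norm_le_of_mem_range (L : E →ₗ[ℝ] F)
    [(LinearMap.ker L).HasOrthogonalProjection] {y : F} (hy : y ∈ LinearMap.range L) :
    ∃! x, (L x = y ∧ ∀ x', L x' = y → ‖x‖ ≤ ‖x'‖) ∧ x ∈ (LinearMap.ker L)ᗮ := by
  obtain ⟨x₁, rfl⟩ := hy
  obtain ⟨k, hk, x₀, hx₀, rfl⟩ := (LinearMap.ker L).exists_add_mem_mem_orthogonal x₁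
  have hLx₀ : L (k + x₀) = L x₀ := by simp [LinearMap.mem_ker.mp hk]
  rw [hLx₀]
  have pythagoras : ∀ x, L x = L x₀ → ‖x‖ ^ 2 = ‖x₀‖ ^ 2 + ‖x - x₀‖ ^ 2 := fun x hx ↦
    norm_sq_eq_norm_sq_add_norm_sub_sq_of_mem_orthogonal hx₀ (by simp [LinearMap.mem_ker, hx])
  refine ⟨x₀, ⟨⟨rfl, fun x hx ↦ ?_⟩, hx₀⟩, fun x ⟨⟨hx, hmin⟩, _⟩ ↦ ?_⟩
  · refine (pow_le_pow_iff_left₀ (norm_nonneg _) (norm_nonneg _) two_ne_zero).mp ?_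
    linarith [pythagoras x hx, sq_nonneg ‖x - x₀‖]
  · have hsq : ‖x - x₀‖ ^ 2 ≤ 0 := by
      nlinarith [pythagoras x hx, hmin x₀ rfl, norm_nonneg x, norm_nonneg x₀]
    rw [← sub_eq_zero, ← norm_eq_zero, ← sq_eq_zero_iff]
    exact le_antisymm hsq (sq_nonneg _)

end MinNorm

namespace Matrix

section addTranspose

variable (n : Type*) (R : Type*)

def addTransposeLinearMap [CommSemiring R] : Matrix n n R →ₗ[R] Matrix n n R :=
  LinearMap.id + (transposeLinearEquiv n n R R).toLinearMap

variable {n R}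

@[simp]
theorem addTransposeLinearMap_apply [CommSemiring R] (S : Matrix n n R) :
    addTransposeLinearMap n R S = S + Sᵀ := rfl

theorem mem_range_addTransposeLinearMap_iff [Field R] [NeZero (2 : R)] {Λ : Matrix n n R} :
    Λ ∈ LinearMap.range (addTransposeLinearMap n R) ↔ Λ.IsSymm := by
  refine ⟨?_, fun hΛ ↦ ⟨(2 : R)⁻¹ • Λ, ?_⟩⟩
  · rintro ⟨S, rfl⟩
    simp [IsSymm, add_comm]
  · rw [addTransposeLinearMap_apply, transpose_smul, hΛ.eq, ← two_smul R, smul_smul,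
      mul_inv_cancel₀ two_ne_zero, one_smul]

end addTranspose

variable {l m n : Type*} [Fintype l] [Fintype m] [Fintype n]

noncomputable abbrev frobeniusInnerProductCore : InnerProductSpace.Core ℝ (Matrix m n ℝ) where
  inner X Y := (X * Yᵀ).trace
  conj_inner_symm X Y := by
    rw [starRingEnd_apply, star_trivial, ← trace_transpose, transpose_mul, transpose_transpose]
  re_inner_nonneg X := by
    simpa using (posSemidef_self_mul_conjTranspose X).trace_nonneg
  definite X hX := trace_mul_conjTranspose_self_eq_zero_iff.mp (by simpa using hX)
  add_left X Y Z := by simp [Matrix.add_mul]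
  smul_left X Y r := by simp

noncomputable abbrev frobeniusInnerNormedAddCommGroup : NormedAddCommGroup (Matrix m n ℝ) :=
  frobeniusInnerProductCore.toNormedAddCommGroup

attribute [local instance] frobeniusInnerNormedAddCommGroup

noncomputable abbrev frobeniusInnerProductSpace : InnerProductSpace ℝ (Matrix m n ℝ) :=
  InnerProductSpace.ofCore frobeniusInnerProductCore.toCore

attribute [local instance] frobeniusInnerProductSpace

theorem frobenius_inner_def (X Y : Matrix m n ℝ) : inner ℝ X Y = (X * Yᵀ).trace := rfl

theorem frobenius_inner_transpose (X : Matrix m n ℝ) (Y : Matrix n m ℝ) :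
    inner ℝ Xᵀ Y = inner ℝ X Yᵀ := by
  rw [frobenius_inner_def, frobenius_inner_def, trace_mul_comm, ← trace_transpose]
  simp

theorem frobenius_inner_mul_left (B : Matrix l m ℝ) (X : Matrix m n ℝ) (Y : Matrix l n ℝ) :
    inner ℝ (B * X) Y = inner ℝ X (Bᵀ * Y) := by
  rw [frobenius_inner_def, frobenius_inner_def, transpose_mul, transpose_transpose,
    Matrix.mul_assoc, trace_mul_comm, Matrix.mul_assoc]

theorem adjoint_addTransposeLinearMap :
    LinearMap.adjoint (addTransposeLinearMap n ℝ) = addTransposeLinearMap n ℝ := by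
  refine LinearMap.IsSymmetric.adjoint_eq fun S T ↦ ?_
  simp [inner_add_left, inner_add_right, frobenius_inner_transpose]

theorem adjoint_mulLeftLinearMap (B : Matrix l m ℝ) :
    LinearMap.adjoint (mulLeftLinearMap n ℝ B) = mulLeftLinearMap n ℝ Bᵀ :=
  ((LinearMap.eq_adjoint_iff _ _).mpr fun Y X ↦ by
    rw [mulLeftLinearMap_apply, mulLeftLinearMap_apply,
      frobenius_inner_mul_left, transpose_transpose]).symm

theorem mem_orthogonal_ker_addTranspose_comp_mulLeft_iff (B : Matrix l m ℝ)
    {H : Matrix m l ℝ} :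
    H ∈ (LinearMap.ker (addTransposeLinearMap l ℝ ∘ₗ mulLeftLinearMap l ℝ B))ᗮ ↔
      ∃ Λ : Matrix l l ℝ, Λ.IsSymm ∧ H = Bᵀ * Λ := by
  rw [LinearMap.orthogonal_ker, LinearMap.adjoint_comp, adjoint_addTransposeLinearMap,
    adjoint_mulLeftLinearMap, LinearMap.range_comp, Submodule.mem_map]
  simp only [mem_range_addTransposeLinearMap_iff, mulLeftLinearMap_apply, eq_comm]

end Matrix

attribute [local instance] Matrix.frobeniusInnerNormedAddCommGroup
  Matrix.frobeniusInnerProductSpace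

theorem frobNorm_eq_norm {m n : ℕ} (H : Matrix (Fin m) (Fin n) ℝ) : frobNorm H = ‖H‖ := by
  rw [frobNorm, norm_eq_sqrt_real_inner, frobenius_inner_def]

theorem min_frobenius_solution_unique_and_in_range_general (n m : ℕ)
    (B : Matrix (Fin n) (Fin m) ℝ)
    (Δ : Matrix (Fin n) (Fin n) ℝ)
    (hsolv : ∃ H : Matrix (Fin m) (Fin n) ℝ, B * H + Hᵀ * Bᵀ = Δ) :
    ∃! H : Matrix (Fin m) (Fin n) ℝ,
      (B * H + Hᵀ * Bᵀ = Δ ∧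
        (∀ H' : Matrix (Fin m) (Fin n) ℝ, B * H' + H'ᵀ * Bᵀ = Δ →
          frobNorm H ≤ frobNorm H')) ∧
      ∃ Λ : Matrix (Fin n) (Fin n) ℝ, Λ.IsSymm ∧ H = Bᵀ * Λ := by
  let L := addTransposeLinearMap (Fin n) ℝ ∘ₗ mulLeftLinearMap (Fin n) ℝ B
  have hL (H : Matrix (Fin m) (Fin n) ℝ) : L H = B * H + Hᵀ * Bᵀ := by
    simp [L, transpose_mul]
  simp_rw [frobNorm_eq_norm, ← hL, ← mem_orthogonal_ker_addTranspose_comp_mulLeft_iff]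
  obtain ⟨H, hH⟩ := hsolv
  exact L.existsUnique_norm_le_of_mem_range ⟨H, (hL H).trans hH⟩

theorem min_frobenius_solution_unique_and_in_range (n m : ℕ)
    (B : Matrix (Fin n) (Fin m) ℝ) (hB : B.rank = m)
    (Δ : Matrix (Fin n) (Fin n) ℝ) (hΔ : Δ.IsSymm)
    (hsolv : ∃ H : Matrix (Fin m) (Fin n) ℝ, B * H + Hᵀ * Bᵀ = Δ) :
    ∃! H : Matrix (Fin m) (Fin n) ℝ,
      (B * H + Hᵀ * Bᵀ = Δ ∧
        (∀ H' : Matrix (Fin m) (Fin n) ℝ, B * H' + H'ᵀ * Bᵀ = Δ →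
          frobNorm H ≤ frobNorm H')) ∧
      ∃ Λ : Matrix (Fin n) (Fin n) ℝ, Λ.IsSymm ∧ H = Bᵀ * Λ :=
  min_frobenius_solution_unique_and_in_range_general n m B Δ hsolv
end

section
/- Let B ∈ ℝ^{n×m} have full column rank, Δ symmetric with Δ = BH₀ + H₀'B' solvable. Then H := (B'B)^{-1}(B'Δ − YB'), where Y is the unique solution of (B'B)Y + Y(B'B) = B'ΔB, satisfies BH + H'B' = Δ. -/
open Matrix

lemma aux_eq_zero_of_trace_transpose_mul_self {p q : ℕ}
    (M : Matrix (Fin p) (Fin q) ℝ) (h : (Mᵀ * M).trace = 0) : M = 0 := by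
  have h' : ∑ j, ∑ i, M i j * M i j = 0 := by
    simpa [Matrix.trace, Matrix.diag, Matrix.mul_apply] using h
  rw [Finset.sum_eq_zero_iff_of_nonneg (fun j _ =>
    Finset.sum_nonneg (fun i _ => mul_self_nonneg _))] at h'
  ext i j
  have h2 := h' j (Finset.mem_univ j)
  rw [Finset.sum_eq_zero_iff_of_nonneg (fun i _ => mul_self_nonneg _)] at h2
  have := h2 i (Finset.mem_univ i)
  simpa [mul_self_eq_zero] using this

lemma aux_abel (N : ℕ) (a₁ a₂ x₁ x₂ y₁ y₂ : Matrix (Fin N) (Fin N) ℝ)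
    (h : y₁ + y₂ = x₂ + x₁) :
    a₁ + x₁ - y₁ + (x₂ + a₂ - y₂) = a₁ + a₂ := by
  have hy : y₁ = x₂ + x₁ - y₂ := by rw [← h]; abel
  rw [hy]; abel

theorem explicit_H_solves (n m : ℕ)
    (B : Matrix (Fin n) (Fin m) ℝ) (hB : B.rank = m)
    (Δ : Matrix (Fin n) (Fin n) ℝ) (hΔ : Δ.IsSymm)
    (hsolv : ∃ H₀ : Matrix (Fin m) (Fin n) ℝ, B * H₀ + H₀ᵀ * Bᵀ = Δ)
    (Y : Matrix (Fin m) (Fin m) ℝ)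
    (hY : (Bᵀ * B) * Y + Y * (Bᵀ * B) = Bᵀ * Δ * B) :
    let H := (Bᵀ * B)⁻¹ * (Bᵀ * Δ - Y * Bᵀ)
    B * H + Hᵀ * Bᵀ = Δ := by
  intro H
  obtain ⟨H₀, hH₀⟩ := hsolv
  have hΔt : Δᵀ = Δ := hΔ
  set G : Matrix (Fin m) (Fin m) ℝ := Bᵀ * B with hGdef
  -- G is invertible
  have hGrank : G.rank = m := by
    rw [hGdef, Matrix.rank_transpose_mul_self, hB]
  have hGu : IsUnit G := by
    rw [← Matrix.mulVec_surjective_iff_isUnit]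
    have ht : LinearMap.range G.mulVecLin = ⊤ := by
      apply Submodule.eq_top_of_finrank_eq
      have h0 : Module.finrank ℝ (LinearMap.range G.mulVecLin) = G.rank := rfl
      rw [h0, hGrank, Module.finrank_fintype_fun_eq_card, Fintype.card_fin]
    have hs := LinearMap.range_eq_top.mp ht
    intro v
    obtain ⟨w, hw⟩ := hs v
    exact ⟨w, by simpa using hw⟩
  have hGd : IsUnit G.det := (Matrix.isUnit_iff_isUnit_det G).mp hGu
  have c1 : G⁻¹ * G = 1 := Matrix.nonsing_inv_mul G hGd
  have c2 : G * G⁻¹ = 1 := Matrix.mul_nonsing_inv G hGd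
  have hGsymm : Gᵀ = G := by rw [hGdef, Matrix.transpose_mul, Matrix.transpose_transpose]
  have hGinvsymm : (G⁻¹)ᵀ = G⁻¹ := by rw [Matrix.transpose_nonsing_inv, hGsymm]
  -- Y is symmetric
  have hYt : G * Yᵀ + Yᵀ * G = Bᵀ * Δ * B := by
    have h := congrArg Matrix.transpose hY
    simp only [Matrix.transpose_add, Matrix.transpose_mul, Matrix.transpose_transpose,
      hΔt, hGsymm] at h
    rw [Matrix.mul_assoc Bᵀ Δ B, ← h]
    abel
  have hYs : Yᵀ = Y := by
    set W : Matrix (Fin m) (Fin m) ℝ := Y - Yᵀ with hWdef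
    have hWanti : Wᵀ = -W := by
      rw [hWdef, Matrix.transpose_sub, Matrix.transpose_transpose, neg_sub]
    have hW0 : G * W + W * G = 0 := by
      rw [hWdef]
      have e : G * (Y - Yᵀ) + (Y - Yᵀ) * G
          = (G * Y + Y * G) - (G * Yᵀ + Yᵀ * G) := by noncomm_ring
      rw [e, hY, hYt, sub_self]
    have hGW : G * W = -(W * G) := eq_neg_of_add_eq_zero_left hW0
    -- trace argument
    have htr : ((B * W)ᵀ * (B * W)).trace = 0 := by
      have e1 : (B * W)ᵀ * (B * W) = Wᵀ * (G * W) := by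
        rw [Matrix.transpose_mul, hGdef]
        simp only [Matrix.mul_assoc]
      have e2 : Wᵀ * (G * W) = W * (W * G) := by
        rw [hGW, hWanti]; noncomm_ring
      have e4 : (W * (W * G)).trace = -(Wᵀ * (G * W)).trace := by
        have cyc : (W * (W * G)).trace = ((W * W) * G).trace := by rw [mul_assoc]
        have cyc2 : (Wᵀ * (G * W)).trace = (W * (Wᵀ * G)).trace := by
          rw [← mul_assoc, Matrix.trace_mul_comm]
        rw [cyc, cyc2, hWanti]
        have e5 : W * (-W * G) = -((W * W) * G) := by noncomm_ring
        rw [e5, Matrix.trace_neg, neg_neg]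
      have h0 : (Wᵀ * (G * W)).trace = 0 := by
        have h6 := e4
        rw [← e2] at h6
        linarith
      rw [e1, h0]
    have hBW : B * W = 0 := aux_eq_zero_of_trace_transpose_mul_self _ htr
    have hGW0 : G * W = 0 := by
      rw [hGdef, Matrix.mul_assoc, hBW, Matrix.mul_zero]
    have hWzero : W = 0 := by
      have h := congrArg (fun X => G⁻¹ * X) hGW0
      simpa [← Matrix.mul_assoc, c1] using h
    have hsub : Y - Yᵀ = 0 := hWzero
    exact (sub_eq_zero.mp hsub).symm
  -- key identity
  have hYexp : G * Y + Y * G = G * (H₀ * B) + (Bᵀ * H₀ᵀ) * G := by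
    rw [hY, ← hH₀]
    simp only [Matrix.mul_add, Matrix.add_mul, Matrix.mul_assoc, hGdef]
  have hK : G⁻¹ * Y + Y * G⁻¹ = (H₀ * B) * G⁻¹ + G⁻¹ * (Bᵀ * H₀ᵀ) := by
    have step : G⁻¹ * (G * Y + Y * G) * G⁻¹
        = G⁻¹ * (G * (H₀ * B) + (Bᵀ * H₀ᵀ) * G) * G⁻¹ := by rw [hYexp]
    have lhsn : G⁻¹ * (G * Y + Y * G) * G⁻¹
        = (G⁻¹ * G) * (Y * G⁻¹) + (G⁻¹ * Y) * (G * G⁻¹) := by noncomm_ring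
    have rhsn : G⁻¹ * (G * (H₀ * B) + (Bᵀ * H₀ᵀ) * G) * G⁻¹
        = (G⁻¹ * G) * ((H₀ * B) * G⁻¹) + (G⁻¹ * (Bᵀ * H₀ᵀ)) * (G * G⁻¹) := by noncomm_ring
    rw [lhsn, rhsn, c1, c2, one_mul, one_mul, mul_one, mul_one] at step
    rw [add_comm] at step
    exact step
  -- transpose of H
  have hHt : Hᵀ = (Δ * B - B * Y) * G⁻¹ := by
    show ((Bᵀ * B)⁻¹ * (Bᵀ * Δ - Y * Bᵀ))ᵀ = _
    rw [Matrix.transpose_mul, Matrix.transpose_sub, Matrix.transpose_mul, Matrix.transpose_mul,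
      Matrix.transpose_transpose, hΔt, hYs, Matrix.transpose_nonsing_inv,
      Matrix.transpose_mul, Matrix.transpose_transpose]
  -- helper cancellations
  have g1 : G⁻¹ * (Bᵀ * (B * H₀)) = H₀ := by
    rw [← Matrix.mul_assoc Bᵀ B H₀, ← hGdef, ← Matrix.mul_assoc, c1, Matrix.one_mul]
  have g2 : Bᵀ * (B * (G⁻¹ * Bᵀ)) = Bᵀ := by
    rw [← Matrix.mul_assoc Bᵀ B (G⁻¹ * Bᵀ), ← hGdef, ← Matrix.mul_assoc, c2, Matrix.one_mul]
  have F1 : B * (G⁻¹ * (Bᵀ * Δ)) = B * H₀ + B * (G⁻¹ * (Bᵀ * (H₀ᵀ * Bᵀ))) := by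
    rw [← hH₀]
    simp only [Matrix.mul_add]
    rw [g1]
  have F2 : Δ * (B * (G⁻¹ * Bᵀ)) = B * (H₀ * (B * (G⁻¹ * Bᵀ))) + H₀ᵀ * Bᵀ := by
    rw [← hH₀]
    simp only [Matrix.add_mul, Matrix.mul_assoc]
    rw [g2]
  have F3 : B * (G⁻¹ * (Y * Bᵀ)) + B * (Y * (G⁻¹ * Bᵀ))
      = B * (H₀ * (B * (G⁻¹ * Bᵀ))) + B * (G⁻¹ * (Bᵀ * (H₀ᵀ * Bᵀ))) := by
    have h3 := congrArg (fun X => B * X * Bᵀ) hK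
    simp only [Matrix.mul_add, Matrix.add_mul, Matrix.mul_assoc] at h3
    exact h3
  show B * ((Bᵀ * B)⁻¹ * (Bᵀ * Δ - Y * Bᵀ)) + Hᵀ * Bᵀ = Δ
  rw [hHt]
  have hGinv : (Bᵀ * B)⁻¹ = G⁻¹ := rfl
  rw [hGinv]
  simp only [Matrix.mul_sub, Matrix.sub_mul, Matrix.mul_assoc]
  rw [F1, F2, ← hH₀]
  exact aux_abel n (B * H₀) (H₀ᵀ * Bᵀ) (B * (G⁻¹ * (Bᵀ * (H₀ᵀ * Bᵀ))))
    (B * (H₀ * (B * (G⁻¹ * Bᵀ)))) (B * (G⁻¹ * (Y * Bᵀ))) (B * (Y * (G⁻¹ * Bᵀ))) F3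
end

section
/- Let A ∈ ℝ^{n×n} be Schur stable, B ∈ ℝ^{n×m}, G(z) = z(zI−A)^{-1}B, G₀(z) = G(z) − (1/2)B, and let Λ be symmetric with M the unique solution of M = A'MA + Λ and X = MB. Then for all z on the unit circle, G(z)*ΛG(z) = G₀(z)*X + X'G₀(z). -/
/-!
Stability of `A` forces `Aᵏ → 0` (Gelfand's formula), so the homogeneous Stein equation
`S = Aᵀ S A` only has the solution `S = 0`; hence the solution `M` is symmetric. On the unit
circle `A G = z (G - B)` and `|z| = 1`, so `G* (Aᵀ M A) G = (G - B)* M (G - B)`, and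
`G* Λ G = G* M G - (G - B)* M (G - B) = G* M B + B* M G - B* M B`, which for symmetric `M` is the
stated symmetrised form.
-/

open Matrix

noncomputable def Gfil {n m : ℕ} (A : Matrix (Fin n) (Fin n) ℝ)
    (B : Matrix (Fin n) (Fin m) ℝ) (z : ℂ) : Matrix (Fin n) (Fin m) ℂ :=
  z • (z • (1 : Matrix (Fin n) (Fin n) ℂ) - A.map Complex.ofReal)⁻¹ * B.map Complex.ofReal

noncomputable def Gfil0 {n m : ℕ} (A : Matrix (Fin n) (Fin n) ℝ)
    (B : Matrix (Fin n) (Fin m) ℝ) (z : ℂ) : Matrix (Fin n) (Fin m) ℂ :=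
  Gfil A B z - (1 / 2 : ℂ) • B.map Complex.ofReal

open Filter Topology

theorem spectrum.tendsto_pow_atTop_nhds_zero {A : Type*} [NormedRing A] [NormedAlgebra ℂ A]
    [CompleteSpace A] {a : A} (ha : ∀ μ ∈ spectrum ℂ a, ‖μ‖ < 1) :
    Tendsto (a ^ ·) atTop (𝓝 0) := by
  nontriviality A
  have hρ : spectralRadius ℂ a < 1 := by
    simpa using spectralRadius_lt_of_forall_lt a (r := 1) fun μ hμ => by
      simpa [← NNReal.coe_lt_coe] using ha μ hμ
  obtain ⟨c, hρc, hc1⟩ := ENNReal.lt_iff_exists_nnreal_btwn.mp hρ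
  -- Gelfand's formula: `‖a ^ k‖ ^ (1 / k) < c` eventually.
  have hbound : ∀ᶠ k : ℕ in atTop, ‖a ^ k‖ ≤ (c : ℝ) ^ k := by
    filter_upwards [(pow_nnnorm_pow_one_div_tendsto_nhds_spectralRadius a).eventually_lt_const hρc,
      eventually_gt_atTop 0] with k hk hk0
    rw [one_div, ENNReal.rpow_inv_lt_iff (by exact_mod_cast hk0), ENNReal.rpow_natCast] at hk
    exact_mod_cast hk.le
  exact squeeze_zero_norm' hbound <| tendsto_pow_atTop_nhds_zero_of_lt_one c.coe_nonneg <| by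
    exact_mod_cast ENNReal.coe_lt_one_iff.mp hc1

namespace Matrix

variable {ι : Type*} [Fintype ι]

theorem tendsto_pow_atTop_nhds_zero_of_spectrum_map_ofReal [DecidableEq ι] {A : Matrix ι ι ℝ}
    (hA : ∀ μ ∈ spectrum ℂ (A.map Complex.ofReal), ‖μ‖ < 1) :
    Tendsto (A ^ ·) atTop (𝓝 0) := by
  have h : Tendsto ((A.map Complex.ofReal) ^ ·) atTop (𝓝 0) := by
    let := Matrix.linftyOpNormedRing (n := ι) (α := ℂ)
    let := Matrix.linftyOpNormedAlgebra (n := ι) (α := ℂ) (R := ℂ)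
    exact spectrum.tendsto_pow_atTop_nhds_zero hA
  refine (Complex.isometry_ofReal.isEmbedding.matrix_map (m := ι) (n := ι)).tendsto_nhds_iff.2 ?_
  convert h using 2 with k
  · exact Matrix.map_pow A Complex.ofRealHom k
  · exact Matrix.map_zero _ Complex.ofReal_zero

section Stein

variable [DecidableEq ι] {R : Type*} [CommRing R] [TopologicalSpace R] [IsTopologicalRing R]
  [T2Space R] {A : Matrix ι ι R}

theorem eq_zero_of_eq_transpose_mul_mul (hA : Tendsto (A ^ ·) atTop (𝓝 0)) {S : Matrix ι ι R}
    (hS : S = Aᵀ * S * A) : S = 0 := by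
  have hpow : ∀ k : ℕ, S = (A ^ k)ᵀ * S * A ^ k := by
    intro k
    induction k with
    | zero => simp
    | succ k ih =>
      calc S = Aᵀ * ((A ^ k)ᵀ * S * A ^ k) * A := by rwa [← ih]
        _ = (A ^ (k + 1))ᵀ * S * A ^ (k + 1) := by
          rw [pow_succ, transpose_mul]; noncomm_ring
  have hlim : Tendsto (fun k : ℕ => (A ^ k)ᵀ * S * A ^ k) atTop (𝓝 (0ᵀ * S * 0)) :=
    (((continuous_id.matrix_transpose.tendsto 0).comp hA).mul tendsto_const_nhds).mul hA
  rw [Matrix.mul_zero] at hlim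
  exact tendsto_nhds_unique (tendsto_const_nhds.congr hpow) hlim

theorem isSymm_of_eq_transpose_mul_mul_add (hA : Tendsto (A ^ ·) atTop (𝓝 0))
    {Λ M : Matrix ι ι R} (hΛ : Λ.IsSymm) (hM : M = Aᵀ * M * A + Λ) : M.IsSymm := by
  have hMT : Mᵀ = Aᵀ * Mᵀ * A + Λ := by
    conv_lhs => rw [hM]
    rw [transpose_add, transpose_mul, transpose_mul, transpose_transpose, hΛ.eq, Matrix.mul_assoc]
  refine (sub_eq_zero.mp (eq_zero_of_eq_transpose_mul_mul hA ?_)).symm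
  calc M - Mᵀ = (Aᵀ * M * A + Λ) - (Aᵀ * Mᵀ * A + Λ) := by rw [← hMT, ← hM]
    _ = Aᵀ * (M - Mᵀ) * A := by noncomm_ring

end Stein

section Algebra

variable {κ R : Type*}

theorem mul_smul_inv_smul_one_sub_mul [DecidableEq ι] [CommRing R] {A : Matrix ι ι R} {z : R}
    (hz : IsUnit (z • 1 - A)) (B : Matrix ι κ R) :
    A * (z • (z • 1 - A)⁻¹ * B) = z • (z • (z • 1 - A)⁻¹ * B - B) := by
  set D := z • (1 : Matrix ι ι R) - A
  have hD : D * D⁻¹ = 1 := mul_nonsing_inv D ((isUnit_iff_isUnit_det D).mp hz)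
  calc A * (z • D⁻¹ * B) = (z • 1 - D) * (z • D⁻¹ * B) := by rw [sub_sub_cancel]
    _ = z • (z • D⁻¹ * B) - z • ((D * D⁻¹) * B) := by
      simp only [Matrix.sub_mul, Matrix.smul_mul, Matrix.mul_smul, Matrix.one_mul, Matrix.mul_assoc,
        smul_sub]
    _ = z • (z • D⁻¹ * B - B) := by rw [hD, Matrix.one_mul, smul_sub]

theorem conjTranspose_mul_sub_mul_mul [CommRing R] [StarRing R] {A M : Matrix ι ι R}
    {G B : Matrix ι κ R} {z : R} (hz : star z * z = 1) (hAG : A * G = z • (G - B)) :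
    Gᴴ * (M - Aᴴ * M * A) * G = Gᴴ * M * B + Bᴴ * M * G - Bᴴ * M * B := by
  have hAMA : Gᴴ * (Aᴴ * M * A) * G = (G - B)ᴴ * M * (G - B) :=
    calc Gᴴ * (Aᴴ * M * A) * G = (A * G)ᴴ * M * (A * G) := by
          simp only [conjTranspose_mul, Matrix.mul_assoc]
      _ = (G - B)ᴴ * M * (G - B) := by
          rw [hAG, conjTranspose_smul, Matrix.smul_mul, Matrix.smul_mul, Matrix.mul_smul, smul_smul,
            hz, one_smul]
  rw [Matrix.mul_sub, Matrix.sub_mul, hAMA]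
  simp only [conjTranspose_sub, Matrix.sub_mul, Matrix.mul_sub]
  abel

theorem conjTranspose_mul_mul_add_sub_eq [Field R] [StarRing R] [CharZero R] {M : Matrix ι ι R}
    (hM : Mᴴ = M) (G B : Matrix ι κ R) :
    Gᴴ * M * B + Bᴴ * M * G - Bᴴ * M * B =
      (G - (1 / 2 : R) • B)ᴴ * (M * B) + (M * B)ᴴ * (G - (1 / 2 : R) • B) := by
  simp only [conjTranspose_sub, conjTranspose_smul, conjTranspose_mul, hM, star_div₀, star_one,
    star_ofNat, Matrix.sub_mul, Matrix.mul_sub, Matrix.smul_mul, Matrix.mul_smul, Matrix.mul_assoc]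
  module

end Algebra

theorem conjTranspose_map_ofReal {m n : Type*} (A : Matrix m n ℝ) :
    (A.map Complex.ofReal)ᴴ = Aᵀ.map Complex.ofReal := by
  ext i j
  simp [conjTranspose_apply]

theorem map_ofReal_mul {l m n : Type*} [Fintype m] (A : Matrix l m ℝ) (B : Matrix m n ℝ) :
    (A * B).map Complex.ofReal = A.map Complex.ofReal * B.map Complex.ofReal :=
  Matrix.map_mul (f := Complex.ofRealHom)

end Matrix

theorem map_ofReal_mul_Gfil {n m : ℕ} {A : Matrix (Fin n) (Fin n) ℝ}
    (B : Matrix (Fin n) (Fin m) ℝ) {z : ℂ} (hz : z ∉ spectrum ℂ (A.map Complex.ofReal)) :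
    A.map Complex.ofReal * Gfil A B z = z • (Gfil A B z - B.map Complex.ofReal) := by
  rw [spectrum.notMem_iff, Algebra.algebraMap_eq_smul_one] at hz
  exact Matrix.mul_smul_inv_smul_one_sub_mul hz _

theorem quadratic_form_reduction (n m : ℕ)
    (A : Matrix (Fin n) (Fin n) ℝ) (B : Matrix (Fin n) (Fin m) ℝ)
    (hA : ∀ μ ∈ spectrum ℂ (A.map (Complex.ofReal)), ‖μ‖ < 1)
    (Λ : Matrix (Fin n) (Fin n) ℝ) (hΛ : Λ.IsSymm)
    (M : Matrix (Fin n) (Fin n) ℝ) (hM : M = Aᵀ * M * A + Λ)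
    (X : Matrix (Fin n) (Fin m) ℝ) (hX : X = M * B)
    (z : ℂ) (hz : ‖z‖ = 1) :
    (Gfil A B z)ᴴ * Λ.map Complex.ofReal * Gfil A B z =
      (Gfil0 A B z)ᴴ * X.map Complex.ofReal +
        (X.map Complex.ofReal)ᴴ * Gfil0 A B z := by
  have hMsymm : M.IsSymm := isSymm_of_eq_transpose_mul_mul_add
    (tendsto_pow_atTop_nhds_zero_of_spectrum_map_ofReal hA) hΛ hM
  have hzz : star z * z = 1 := by
    rw [Complex.star_def, Complex.conj_mul', hz, Complex.ofReal_one, one_pow]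
  have hAG := map_ofReal_mul_Gfil B fun hmem => (hA z hmem).ne hz
  have hΛc : Λ.map Complex.ofReal = M.map Complex.ofReal -
      (A.map Complex.ofReal)ᴴ * M.map Complex.ofReal * A.map Complex.ofReal := by
    rw [eq_sub_of_add_eq' hM.symm, conjTranspose_map_ofReal]
    simp [Matrix.map_sub, map_ofReal_mul]
  have hMc : (M.map Complex.ofReal)ᴴ = M.map Complex.ofReal := by
    rw [conjTranspose_map_ofReal, hMsymm.eq]
  rw [hΛc, conjTranspose_mul_sub_mul_mul hzz hAG, conjTranspose_mul_mul_add_sub_eq hMc, hX,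
    map_ofReal_mul, Gfil0]
end

section
/- For m×m Hermitian positive definite matrices P and Q, the function D(P,Q) := tr(PQ^{-1} − log(PQ^{-1}) − I) is nonnegative, and equals zero if and only if P = Q. -/
/-!
Write `Q = Bᴴ B` with `B` invertible. The divergence is invariant under the congruence
`X ↦ Bᴴ X B` (the trace term is a similarity invariant and both determinants pick up the factor
`‖det B‖²`), so `D(P, Q) = D(A, 1)` for the positive definite `A = B⁻ᴴ P B⁻¹`. In terms of the
eigenvalues `λᵢ > 0` of `A`, `D(A, 1) = ∑ (λᵢ - log λᵢ - 1)`, a sum of terms that are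
nonnegative by `log x ≤ x - 1` and vanish only when every `λᵢ = 1`, that is, when `A = 1`.
-/

open Matrix
open scoped ComplexOrder

theorem Real.log_eq_sub_one_iff {x : ℝ} (hx : 0 < x) : Real.log x = x - 1 ↔ x = 1 := by
  refine ⟨fun h => ?_, fun h => by simp [h]⟩
  by_contra hx1
  exact (Real.log_lt_sub_one_of_pos hx hx1).ne h

namespace Matrix

variable {𝕜 n : Type*} [RCLike 𝕜] [Fintype n] [DecidableEq n]

open RCLike

noncomputable def itakuraSaito (P Q : Matrix n n 𝕜) : ℝ :=
  re (P * Q⁻¹).trace - Real.log (re P.det) + Real.log (re Q.det) - Fintype.card n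

theorem IsHermitian.eq_one_of_eigenvalues_eq_one {A : Matrix n n 𝕜} (hA : A.IsHermitian)
    (h : ∀ i, hA.eigenvalues i = 1) : A = 1 := by
  rw [hA.spectral_theorem, show (RCLike.ofReal ∘ hA.eigenvalues : n → 𝕜) = fun _ => 1 from
    funext fun i => by simp [h i], diagonal_one, map_one]

theorem PosDef.re_det_pos {A : Matrix n n 𝕜} (hA : A.PosDef) : 0 < re A.det :=
  (RCLike.pos_iff.1 hA.det_pos).1

theorem PosDef.itakuraSaito_one_eq_sum {A : Matrix n n 𝕜} (hA : A.PosDef) :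
    itakuraSaito A 1 =
      ∑ i, (hA.isHermitian.eigenvalues i - Real.log (hA.isHermitian.eigenvalues i) - 1) := by
  have hdet : re A.det = ∏ i, hA.isHermitian.eigenvalues i := by
    rw [hA.isHermitian.det_eq_prod_eigenvalues, ← ofReal_prod, ofReal_re]
  have htrace : re A.trace = ∑ i, hA.isHermitian.eigenvalues i := by
    rw [hA.isHermitian.trace_eq_sum_eigenvalues, ← ofReal_sum, ofReal_re]
  rw [itakuraSaito, inv_one, mul_one, det_one, one_re, Real.log_one, htrace, hdet,
    Real.log_prod fun i _ => (hA.eigenvalues_pos i).ne', Finset.sum_sub_distrib,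
    Finset.sum_sub_distrib, Finset.sum_const, Finset.card_univ, nsmul_one]
  ring

theorem PosDef.itakuraSaito_one_nonneg {A : Matrix n n 𝕜} (hA : A.PosDef) :
    0 ≤ itakuraSaito A 1 := by
  rw [hA.itakuraSaito_one_eq_sum]
  exact Finset.sum_nonneg fun i _ => by
    linarith [Real.log_le_sub_one_of_pos (hA.eigenvalues_pos i)]

theorem PosDef.itakuraSaito_one_eq_zero_iff {A : Matrix n n 𝕜} (hA : A.PosDef) :
    itakuraSaito A 1 = 0 ↔ A = 1 := by
  refine ⟨fun h => hA.isHermitian.eq_one_of_eigenvalues_eq_one fun i => ?_, fun h => ?_⟩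
  · rw [hA.itakuraSaito_one_eq_sum, Finset.sum_eq_zero_iff_of_nonneg fun i _ => by
      linarith [Real.log_le_sub_one_of_pos (hA.eigenvalues_pos i)]] at h
    rw [← Real.log_eq_sub_one_iff (hA.eigenvalues_pos i)]
    linarith [h i (Finset.mem_univ i)]
  · subst h
    simp [itakuraSaito]

theorem itakuraSaito_conjTranspose_mul_mul {P Q B : Matrix n n 𝕜} (hP : P.PosDef)
    (hQ : Q.PosDef) (hB : IsUnit B) :
    itakuraSaito (Bᴴ * P * B) (Bᴴ * Q * B) = itakuraSaito P Q := by
  have hBdet : IsUnit B.det := (isUnit_iff_isUnit_det B).1 hB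
  have hBdet' : IsUnit Bᴴ.det := by simpa using hBdet.star
  have htrace : (Bᴴ * P * B * (Bᴴ * Q * B)⁻¹).trace = (P * Q⁻¹).trace := by
    simp only [mul_inv_rev, mul_assoc, mul_nonsing_inv_cancel_left B _ hBdet]
    rw [trace_mul_comm, ← mul_assoc, nonsing_inv_mul_cancel_right Bᴴ _ hBdet']
  have hnorm : ‖B.det‖ ^ 2 ≠ 0 := by simpa using hBdet.ne_zero
  have hdet (A : Matrix n n 𝕜) : re (Bᴴ * A * B).det = ‖B.det‖ ^ 2 * re A.det := by
    rw [det_mul, det_mul, det_conjTranspose, mul_right_comm, RCLike.star_def, RCLike.conj_mul,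
      ← ofReal_pow, re_ofReal_mul]
  rw [itakuraSaito, itakuraSaito, htrace, hdet, hdet, Real.log_mul hnorm hP.re_det_pos.ne',
    Real.log_mul hnorm hQ.re_det_pos.ne']
  ring

open scoped MatrixOrder in
theorem PosDef.exists_isUnit_eq_conjTranspose_mul_self {Q : Matrix n n 𝕜} (hQ : Q.PosDef) :
    ∃ B : Matrix n n 𝕜, IsUnit B ∧ Q = Bᴴ * B := by
  obtain ⟨B, rfl⟩ := CStarAlgebra.nonneg_iff_eq_star_mul_self.1 hQ.posSemidef.nonneg
  exact ⟨B, isUnit_of_mul_isUnit_right hQ.isUnit, rfl⟩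

end Matrix

theorem itakura_saito_pointwise_nonneg (m : ℕ)
    (P Q : Matrix (Fin m) (Fin m) ℂ)
    (hP : P.PosDef) (hQ : Q.PosDef) :
    0 ≤ (P * Q⁻¹).trace.re - Real.log P.det.re + Real.log Q.det.re - m ∧
    ((P * Q⁻¹).trace.re - Real.log P.det.re + Real.log Q.det.re - m = 0 ↔ P = Q) := by
  have hD : (P * Q⁻¹).trace.re - Real.log P.det.re + Real.log Q.det.re - m =
      itakuraSaito P Q := by
    simp [itakuraSaito]
  obtain ⟨B, hB, rfl⟩ := hQ.exists_isUnit_eq_conjTranspose_mul_self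
  have hBdet : IsUnit B.det := (isUnit_iff_isUnit_det B).1 hB
  have hBdet' : IsUnit Bᴴ.det := by simpa using hBdet.star
  obtain ⟨A, hA, rfl⟩ : ∃ A : Matrix (Fin m) (Fin m) ℂ, A.PosDef ∧ P = Bᴴ * A * B := by
    refine ⟨(B⁻¹)ᴴ * P * B⁻¹, hP.conjTranspose_mul_mul_same (mulVec_injective_of_isUnit ?_), ?_⟩
    · exact isUnit_nonsing_inv_iff.2 hB
    · simp [conjTranspose_nonsing_inv, ← mul_assoc, mul_nonsing_inv _ hBdet',
        nonsing_inv_mul_cancel_right _ _ hBdet]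
  have hAB : itakuraSaito (Bᴴ * A * B) (Bᴴ * B) = itakuraSaito A 1 := by
    simpa using itakuraSaito_conjTranspose_mul_mul hA PosDef.one hB
  have hcancel : Bᴴ * A * B = Bᴴ * B ↔ A = 1 := by
    nth_rw 2 [← mul_one Bᴴ]
    rw [hB.mul_left_inj, (isUnit_conjTranspose B).2 hB |>.mul_right_inj]
  rw [hD, hAB, hcancel]
  exact ⟨hA.itakuraSaito_one_nonneg, hA.itakuraSaito_one_eq_zero_iff⟩
end

section
/- Define on m×n complex matrices the function J̃(C) := tr(C'ΣC) − log det(B'CC'B), where Σ ≻ 0 is n×n Hermitian and B ∈ ℂ^{n×m} has full column rank, restricted to C with B'C invertible. Then the gradient condition ∇J̃(C) = 0 is equivalent to C'Σ = (B'C)^{-1}B', and any such C satisfies B'CC' = B'Σ^{-1}. -/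
open Matrix
open scoped ComplexOrder

theorem gradient_condition_equivalence (n m : ℕ)
    (S : Matrix (Fin n) (Fin n) ℂ) (hS : S.PosDef)
    (B : Matrix (Fin n) (Fin m) ℂ) (hB : B.rank = m)
    (C : Matrix (Fin n) (Fin m) ℂ) (hBC : IsUnit (Bᴴ * C)) :
    ((2 : ℂ) • (S * C) - (2 : ℂ) • (B * (Cᴴ * B)⁻¹) = 0 ↔
      Cᴴ * S = (Bᴴ * C)⁻¹ * Bᴴ) ∧
    (Cᴴ * S = (Bᴴ * C)⁻¹ * Bᴴ → Bᴴ * (C * Cᴴ) = Bᴴ * S⁻¹) := by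
  have hS' : S.IsHermitian := hS.isHermitian
  have hdet : IsUnit (Bᴴ * C).det := (Matrix.isUnit_iff_isUnit_det _).mp hBC
  have hSdet : IsUnit S.det := hS.det_pos.ne'.isUnit
  have key : S * C = B * (Cᴴ * B)⁻¹ ↔ Cᴴ * S = (Bᴴ * C)⁻¹ * Bᴴ := by
    constructor
    · intro h
      have := congrArg conjTranspose h
      simpa [Matrix.conjTranspose_mul, Matrix.conjTranspose_nonsing_inv, hS'.eq] using this
    · intro h
      have := congrArg conjTranspose h
      simpa [Matrix.conjTranspose_mul, Matrix.conjTranspose_nonsing_inv, hS'.eq] using this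
  constructor
  · rw [← key]
    constructor
    · intro h
      have h1 : (2 : ℂ) • (S * C) = (2 : ℂ) • (B * (Cᴴ * B)⁻¹) := sub_eq_zero.mp h
      exact smul_right_injective _ (two_ne_zero) h1
    · intro h
      rw [h, sub_self]
  · intro h
    have hC : Cᴴ = (Bᴴ * C)⁻¹ * Bᴴ * S⁻¹ := by
      have := congrArg (· * S⁻¹) h
      simpa [Matrix.mul_assoc, Matrix.mul_nonsing_inv S hSdet] using this
    calc Bᴴ * (C * Cᴴ) = (Bᴴ * C) * ((Bᴴ * C)⁻¹ * (Bᴴ * S⁻¹)) := by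
          rw [hC]; simp only [Matrix.mul_assoc]
      _ = Bᴴ * S⁻¹ := by
          rw [← Matrix.mul_assoc, Matrix.mul_nonsing_inv _ hdet, Matrix.one_mul]
end
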